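/- Let q > 1. Then there exists a constant c ≡ c(q) > 0 such that for all real numbers k̃, k' with 0 ≤ k̃ ≤ k' and every u ∈ ℝ: 𝔤₊(u, k̃) ≥ c (u − k')₊^{q+1}. -/

import Mathlib

noncomputable section

/-- `𝔤₊(a,b) := q ∫_b^a |t|^{q-1} (t-b)₊ dt` (oriented integral). -/
def gPlus (q a b : ℝ) : ℝ := q * ∫ t in b..a, |t| ^ (q - 1) * max (t - b) 0

/-!
On `[k̃, u]` with `k̃ ≥ 0` we have `|t| ≥ t - k̃ ≥ 0`, so for `q ≥ 1` the integrand dominates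
`(t - k̃)^q`, whence `𝔤₊(u, k̃) ≥ q/(q+1) · (u - k̃)₊^{q+1} ≥ q/(q+1) · (u - k')₊^{q+1}`.
-/

open intervalIntegral

theorem integral_sub_rpow {r : ℝ} (hr : -1 < r) (a b : ℝ) :
    ∫ t in b..a, (t - b) ^ r = (a - b) ^ (r + 1) / (r + 1) := by
  rw [integral_comp_sub_right (fun t => t ^ r) b, integral_rpow (Or.inl hr), sub_self,
    Real.zero_rpow (by linarith), sub_zero]

theorem sub_rpow_le_abs_rpow_mul_posPart {q b t : ℝ} (hq : 1 ≤ q) (hb : 0 ≤ b) (hbt : b ≤ t) :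
    (t - b) ^ q ≤ |t| ^ (q - 1) * max (t - b) 0 := by
  have htb : 0 ≤ t - b := sub_nonneg.mpr hbt
  rw [abs_of_nonneg (hb.trans hbt), max_eq_left htb]
  calc (t - b) ^ q = (t - b) ^ (q - 1) * (t - b) := by
        rw [← Real.rpow_add_one' htb (by linarith), sub_add_cancel]
    _ ≤ t ^ (q - 1) * (t - b) := by gcongr; linarith

theorem gPlus_eq_zero_of_le {q a b : ℝ} (hab : a ≤ b) : gPlus q a b = 0 := by
  rw [gPlus, integral_congr (g := fun _ => (0 : ℝ)), integral_zero, mul_zero]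
  intro t ht
  rw [Set.uIcc_of_ge hab] at ht
  simp [max_eq_right (sub_nonpos.mpr ht.2)]

theorem gPlus_ge_of_le {q a b : ℝ} (hq : 1 ≤ q) (hb : 0 ≤ b) (hba : b ≤ a) :
    q / (q + 1) * (a - b) ^ (q + 1) ≤ gPlus q a b := by
  have hpow : Continuous fun t : ℝ => (t - b) ^ q :=
    (Real.continuous_rpow_const (by linarith)).comp (continuous_sub_right b)
  have hintegrand : Continuous fun t : ℝ => |t| ^ (q - 1) * max (t - b) 0 :=
    ((Real.continuous_rpow_const (by linarith)).comp continuous_abs).mul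
      ((continuous_sub_right b).max continuous_const)
  calc q / (q + 1) * (a - b) ^ (q + 1) = q * ∫ t in b..a, (t - b) ^ q := by
        rw [integral_sub_rpow (by linarith)]; ring
    _ ≤ gPlus q a b := by
        refine mul_le_mul_of_nonneg_left (integral_mono_on hba (hpow.intervalIntegrable _ _)
          (hintegrand.intervalIntegrable _ _) fun t ht => ?_) (by linarith)
        exact sub_rpow_le_abs_rpow_mul_posPart hq hb ht.1

theorem gPlus_ge_posPart {q a b : ℝ} (hq : 1 ≤ q) (hb : 0 ≤ b) :
    q / (q + 1) * max (a - b) 0 ^ (q + 1) ≤ gPlus q a b := by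
  rcases le_total a b with hab | hba
  · rw [gPlus_eq_zero_of_le hab, max_eq_right (sub_nonpos.mpr hab),
      Real.zero_rpow (by linarith), mul_zero]
  · simpa [max_eq_left (sub_nonneg.mpr hba)] using gPlus_ge_of_le hq hb hba

/-- for `q > 1` there is `c = c(q) > 0` such that for all
`0 ≤ k̃ ≤ k'` and all `u ∈ ℝ`, `𝔤₊(u, k̃) ≥ c (u - k')₊^{q+1}`. -/
theorem gPlus_lower_bound (q : ℝ) (hq : 1 < q) :
    ∃ c : ℝ, 0 < c ∧ ∀ ktil k' u : ℝ, 0 ≤ ktil → ktil ≤ k' →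
      c * max (u - k') 0 ^ (q + 1) ≤ gPlus q u ktil := by
  refine ⟨q / (q + 1), by positivity, fun ktil k' u hktil hk => ?_⟩
  calc q / (q + 1) * max (u - k') 0 ^ (q + 1)
      ≤ q / (q + 1) * max (u - ktil) 0 ^ (q + 1) := by gcongr
    _ ≤ gPlus q u ktil := gPlus_ge_posPart hq.le hktil
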